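/- The extension of a syntactic translation τ : ℰ → ℰ' between second-order equational presentations preserves second-order equational derivability: if Θ ▹ Γ ⊢ s ≡ t is derivable from the axioms of ℰ in Second-Order Equational Logic, then Θ ▹ Γ ⊢ τ(s) ≡ τ(t) is derivable from the axioms of ℰ'. -/
import Mathlib

/-! ## Second-order syntax (de Bruijn representation)

An arity/sequence `(m₁,…,m_k) ∈ ℕ*` is a `Ctxa`.  A second-order signature is a set of
operators with such arities.  Terms in a metavariable context (given by a type `M` of
metavariables with meta-arities `mar : M → ℕ`) and a variable context of size `n` are
generated by variables, metavariables applied to their parameters, and operators binding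
variables in their arguments.  Working with de Bruijn indices gives terms up to
α-equivalence. -/

/-- A finite sequence `(m₁,…,m_k)` of natural numbers (an element of ℕ*). -/
structure Ctxa where
  len : ℕ
  ar : Fin len → ℕ

/-- A second-order signature: a set of operators with arities `(n₁,…,n_k) ∈ ℕ*`;
an operator of arity `(n₁,…,n_k)` takes `k` arguments and binds `nᵢ` variables in the
`i`-th argument. -/
structure SOSig : Type 1 where
  Op : Type
  arity : Op → Ctxa

namespace SO

/-- Second-order terms over the signature `S`, in metavariable context `(M, mar)` and
variable context of size `n` (variables are de Bruijn indices `Fin n`, so terms are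
automatically identified up to α-equivalence). -/
inductive Term (S : SOSig) (M : Type) (mar : M → ℕ) : ℕ → Type
  | var {n : ℕ} : Fin n → Term S M mar n
  | mvar {n : ℕ} (m : M) (ts : Fin (mar m) → Term S M mar n) : Term S M mar n
  | op {n : ℕ} (o : S.Op)
      (ts : ∀ i : Fin (S.arity o).len, Term S M mar (n + (S.arity o).ar i)) :
      Term S M mar n

namespace Term

variable {S : SOSig} {M M' : Type} {mar : M → ℕ} {mar' : M' → ℕ}

/-- Cast a term along an equality of variable-context sizes. -/
def castCtx {n n' : ℕ} (h : n = n') (t : Term S M mar n) : Term S M mar n' := h ▸ t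

/-- Extend a renaming to a context enlarged by `p` bound variables. -/
def extRen {n n' : ℕ} (ρ : Fin n → Fin n') (p : ℕ) : Fin (n + p) → Fin (n' + p) :=
  Fin.addCases (fun j => Fin.castAdd p (ρ j)) (fun j => Fin.natAdd n' j)

/-- Renaming of variables. -/
def rename : ∀ {n n' : ℕ}, Term S M mar n → (Fin n → Fin n') → Term S M mar n'
  | _, _, .var x, ρ => .var (ρ x)
  | _, _, .mvar m ts, ρ => .mvar m (fun j => rename (ts j) ρ)
  | _, _, .op o ts, ρ => .op o (fun i => rename (ts i) (extRen ρ _))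

/-- Weakening of a term by `p` fresh variables (added at the end of the context). -/
def weaken {n : ℕ} (p : ℕ) (t : Term S M mar n) : Term S M mar (n + p) :=
  rename t (Fin.castAdd p)

/-- Extend a simultaneous substitution to a context enlarged by `p` bound variables
(the bound variables are mapped to themselves). -/
def extSub {n n' : ℕ} (σ : Fin n → Term S M mar n') (p : ℕ) :
    Fin (n + p) → Term S M mar (n' + p) :=
  Fin.addCases (fun j => weaken p (σ j)) (fun j => .var (Fin.natAdd n' j))

/-- Capture-avoiding simultaneous substitution `t{xᵢ := σ(i)}` of terms for variables. -/
def subst : ∀ {n n' : ℕ}, Term S M mar n → (Fin n → Term S M mar n') → Term S M mar n'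
  | _, _, .var x, σ => σ x
  | _, _, .mvar m ts, σ => .mvar m (fun j => subst (ts j) σ)
  | _, _, .op o ts, σ => .op o (fun i => subst (ts i) (extSub σ _))

/-- The renaming inserting `p` fresh variables in the middle of a context `n' + a`
(between the first `n'` variables and the last `a` bound ones). -/
def midWeak (n' p a : ℕ) : Fin (n' + a) → Fin (n' + p + a) :=
  Fin.addCases (fun j => Fin.castAdd a (Fin.castAdd p j)) (fun j => Fin.natAdd (n' + p) j)

/-- Metasubstitution `t{𝕞 := (x⃗_𝕞)s(𝕞)}` (simultaneously renaming the variables of `t`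
along `ρ`): each metavariable `𝕞` of meta-arity `mar 𝕞` is replaced by the term
`s 𝕞`, which lives in the target context extended by `mar 𝕞` abstracted variables;
the parameters of `𝕞` are substituted for those abstracted variables. -/
def msubst : ∀ {n n' : ℕ}, Term S M mar n → (Fin n → Fin n') →
    (∀ m : M, Term S M' mar' (n' + mar m)) → Term S M' mar' n'
  | _, _, .var x, ρ, _ => .var (ρ x)
  | _, _, .mvar m ts, ρ, s =>
      subst (s m) (Fin.addCases (fun j => .var j) (fun j => msubst (ts j) ρ s))
  | _, _, .op o ts, ρ, s =>
      .op o (fun i => msubst (ts i) (extRen ρ _) (fun m => rename (s m) (midWeak _ _ _)))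

end Term

end SO
namespace SO

/-- A second-order equation `Θ ▹ Γ ⊢ lhs ≡ rhs` in a metavariable context
`𝕞₁:[m₁],…,𝕞_k:[m_k]` (given by `mlen` and `mar`) and a variable context of size
`ctx`. -/
structure SOEqn (S : SOSig) where
  mlen : ℕ
  mar : Fin mlen → ℕ
  ctx : ℕ
  lhs : Term S (Fin mlen) mar ctx
  rhs : Term S (Fin mlen) mar ctx

/-- The renaming regarding a context `Δ,x⃗` (of size `d + a`) inside `Γ,Δ,x⃗`
(of size `(n + d) + a`). -/
def sideWeak (n d a : ℕ) : Fin (d + a) → Fin (n + d + a) :=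
  Fin.addCases (fun j => Fin.castAdd a (Fin.natAdd n j)) (fun j => Fin.natAdd (n + d) j)

/-- **Second-Order Equational Logic**: derivability of an equation
`Θ ▹ Γ ⊢ s ≡ t` from a set `E` of axioms, by the rules: (Axioms) every axiom is
derivable; (Equivalence) reflexivity, symmetry, transitivity; (Extended
metasubstitution) from `𝕞₁:[m₁],…,𝕞_k:[m_k] ▹ Γ ⊢ s ≡ t` (with `Γ` of size `n`) and
`Θ ▹ Δ, x⃗ᵢ ⊢ σᵢ ≡ τᵢ` (`1 ≤ i ≤ k`, `Δ` of size `d`) derive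
`Θ ▹ Γ, Δ ⊢ s{𝕞ᵢ := (x⃗ᵢ)σᵢ} ≡ t{𝕞ᵢ := (x⃗ᵢ)τᵢ}`. -/
inductive SODeriv (S : SOSig) (E : Set (SOEqn S)) :
    ∀ (k : ℕ) (mar : Fin k → ℕ) (n : ℕ),
      Term S (Fin k) mar n → Term S (Fin k) mar n → Prop
  | ax {e : SOEqn S} (he : e ∈ E) : SODeriv S E e.mlen e.mar e.ctx e.lhs e.rhs
  | refl {k : ℕ} {mar : Fin k → ℕ} {n : ℕ} (t : Term S (Fin k) mar n) :
      SODeriv S E k mar n t t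
  | symm {k : ℕ} {mar : Fin k → ℕ} {n : ℕ} {s t : Term S (Fin k) mar n} :
      SODeriv S E k mar n s t → SODeriv S E k mar n t s
  | trans {k : ℕ} {mar : Fin k → ℕ} {n : ℕ} {s t u : Term S (Fin k) mar n} :
      SODeriv S E k mar n s t → SODeriv S E k mar n t u → SODeriv S E k mar n s u
  | msub {k : ℕ} {mar : Fin k → ℕ} {n : ℕ} {s t : Term S (Fin k) mar n}
      {k' : ℕ} {mar' : Fin k' → ℕ} {d : ℕ}
      {σ τ : ∀ i : Fin k, Term S (Fin k') mar' (d + mar i)} :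
      SODeriv S E k mar n s t →
      (∀ i, SODeriv S E k' mar' (d + mar i) (σ i) (τ i)) →
      SODeriv S E k' mar' (n + d)
        (Term.msubst s (Fin.castAdd d)
          (fun i => Term.rename (σ i) (sideWeak n d (mar i))))
        (Term.msubst t (Fin.castAdd d)
          (fun i => Term.rename (τ i) (sideWeak n d (mar i))))

end SO
namespace SO

/-- A syntactic translation between second-order signatures: each operator
`ω : (m₁,…,m_k)` of `S` is assigned a term `𝕞₁:[m₁],…,𝕞_k:[m_k] ▹ ∅ ⊢ τ_ω` over `S'`
(empty variable context; the metavariable context is determined by the arity). -/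
def Translation (S S' : SOSig) : Type :=
  ∀ o : S.Op, Term S' (Fin (S.arity o).len) (S.arity o).ar 0

/-- The extension of a syntactic translation to all terms: `τ(x) = x`,
`τ(𝕞[t₁,…,t_m]) = 𝕞[τ(t₁),…,τ(t_m)]`, and
`τ(ω((x⃗₁)t₁,…,(x⃗_k)t_k)) = τ_ω{𝕞ᵢ := (x⃗ᵢ)τ(tᵢ)}`. -/
def Translation.ext {S S' : SOSig} (τ : Translation S S') {M : Type} {mar : M → ℕ} :
    ∀ {n : ℕ}, Term S M mar n → Term S' M mar n
  | _, .var x => .var x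
  | _, .mvar m ts => .mvar m (fun j => τ.ext (ts j))
  | _, .op o ts => Term.msubst (τ o) Fin.elim0 (fun i => τ.ext (ts i))

end SO
namespace SO

/-- A second-order equational presentation: a second-order signature together with a
set of axioms. -/
structure SOPres : Type 1 where
  sig : SOSig
  axioms : Set (SOEqn sig)

/-- A syntactic translation between second-order equational presentations: a syntactic
translation of the underlying signatures mapping axioms to theorems. -/
def IsEqTranslation (P P' : SOPres) (τ : Translation P.sig P'.sig) : Prop :=
  ∀ e ∈ P.axioms,
    SODeriv P'.sig P'.axioms e.mlen e.mar e.ctx (τ.ext e.lhs) (τ.ext e.rhs)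

end SO

namespace SO
namespace Term

variable {S : SOSig} {M M' M'' : Type} {mar : M → ℕ} {mar' : M' → ℕ} {mar'' : M'' → ℕ}

@[simp] theorem extRen_castAdd {n n' p : ℕ} (ρ : Fin n → Fin n') (j : Fin n) :
    extRen ρ p (Fin.castAdd p j) = Fin.castAdd p (ρ j) := by simp [extRen]

@[simp] theorem extRen_natAdd {n n' p : ℕ} (ρ : Fin n → Fin n') (j : Fin p) :
    extRen ρ p (Fin.natAdd n j) = Fin.natAdd n' j := by simp [extRen]

@[simp] theorem extSub_castAdd {n n' p : ℕ} (σ : Fin n → Term S M mar n') (j : Fin n) :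
    extSub σ p (Fin.castAdd p j) = weaken p (σ j) := by simp [extSub]

@[simp] theorem extSub_natAdd {n n' p : ℕ} (σ : Fin n → Term S M mar n') (j : Fin p) :
    extSub σ p (Fin.natAdd n j) = .var (Fin.natAdd n' j) := by simp [extSub]

@[simp] theorem midWeak_castAdd {n p a : ℕ} (j : Fin n) :
    midWeak n p a (Fin.castAdd a j) = Fin.castAdd a (Fin.castAdd p j) := by simp [midWeak]

@[simp] theorem midWeak_natAdd {n p a : ℕ} (j : Fin a) :
    midWeak n p a (Fin.natAdd n j) = Fin.natAdd (n + p) j := by simp [midWeak]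

theorem rename_rename {n : ℕ} (t : Term S M mar n) :
    ∀ {n' n'' : ℕ} (ρ₁ : Fin n → Fin n') (ρ₂ : Fin n' → Fin n''),
      rename (rename t ρ₁) ρ₂ = rename t (fun x => ρ₂ (ρ₁ x)) := by
  induction t with
  | var x => intros; rfl
  | mvar m ts ih =>
    intro n' n'' ρ₁ ρ₂
    simp only [rename]
    congr 1
    funext j
    exact ih j ρ₁ ρ₂
  | op o ts ih =>
    intro n' n'' ρ₁ ρ₂
    simp only [rename]
    congr 1
    funext i
    rw [ih i (extRen ρ₁ _) (extRen ρ₂ _)]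
    congr 1
    funext x
    cases x using Fin.addCases with
    | left j => simp
    | right j => simp

theorem weaken_rename {n n' : ℕ} (t : Term S M mar n) (ρ : Fin n → Fin n') (p : ℕ) :
    rename (weaken p t) (extRen ρ p) = weaken p (rename t ρ) := by
  simp only [weaken, rename_rename]
  congr 1
  funext x
  simp

theorem subst_rename {n : ℕ} (t : Term S M mar n) :
    ∀ {n' n'' : ℕ} (ρ : Fin n → Fin n') (σ : Fin n' → Term S M mar n''),
      subst (rename t ρ) σ = subst t (fun x => σ (ρ x)) := by
  induction t with
  | var x => intros; rfl
  | mvar m ts ih =>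
    intro n' n'' ρ σ
    simp only [rename, subst]
    congr 1
    funext j
    exact ih j ρ σ
  | op o ts ih =>
    intro n' n'' ρ σ
    simp only [rename, subst]
    congr 1
    funext i
    rw [ih i (extRen ρ _) (extSub σ _)]
    congr 1
    funext x
    cases x using Fin.addCases with
    | left j => simp
    | right j => simp

theorem rename_subst {n : ℕ} (t : Term S M mar n) :
    ∀ {n' n'' : ℕ} (σ : Fin n → Term S M mar n') (ρ : Fin n' → Fin n''),
      rename (subst t σ) ρ = subst t (fun x => rename (σ x) ρ) := by
  induction t with
  | var x => intros; rfl
  | mvar m ts ih =>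
    intro n' n'' σ ρ
    simp only [rename, subst]
    congr 1
    funext j
    exact ih j σ ρ
  | op o ts ih =>
    intro n' n'' σ ρ
    simp only [rename, subst]
    congr 1
    funext i
    rw [ih i (extSub σ _) (extRen ρ _)]
    congr 1
    funext x
    cases x using Fin.addCases with
    | left j => simp [weaken_rename]
    | right j => simp [rename]

theorem subst_subst {n : ℕ} (t : Term S M mar n) :
    ∀ {n' n'' : ℕ} (σ₁ : Fin n → Term S M mar n') (σ₂ : Fin n' → Term S M mar n''),
      subst (subst t σ₁) σ₂ = subst t (fun x => subst (σ₁ x) σ₂) := by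
  induction t with
  | var x => intros; rfl
  | mvar m ts ih =>
    intro n' n'' σ₁ σ₂
    simp only [subst]
    congr 1
    funext j
    exact ih j σ₁ σ₂
  | op o ts ih =>
    intro n' n'' σ₁ σ₂
    simp only [subst]
    congr 1
    funext i
    rw [ih i (extSub σ₁ _) (extSub σ₂ _)]
    congr 1
    funext x
    cases x using Fin.addCases with
    | left j =>
      simp only [extSub_castAdd, weaken, subst_rename, rename_subst]
    | right j => simp [subst]

theorem extSub_var {n p : ℕ} :
    (extSub (fun x => (.var x : Term S M mar n)) p) = fun x => .var x := by
  funext x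
  cases x using Fin.addCases with
  | left j => simp [weaken, rename]
  | right j => simp

@[simp] theorem subst_var {n : ℕ} (t : Term S M mar n) :
    subst t (fun x => (.var x : Term S M mar n)) = t := by
  induction t with
  | var x => rfl
  | mvar m ts ih =>
    simp only [subst]
    congr 1
    funext j
    exact ih j
  | op o ts ih =>
    simp only [subst]
    congr 1
    funext i
    rw [extSub_var, ih i]

theorem midWeak_eq_extRen (n p a : ℕ) :
    midWeak n p a = extRen (Fin.castAdd p (n := n)) a := by
  funext x
  cases x using Fin.addCases with
  | left j => simp
  | right j => simp

/-- Generalized metasubstitution where variables are sent to terms rather than renamed. -/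
def msubstS : ∀ {n n' : ℕ}, Term S M mar n → (Fin n → Term S M' mar' n') →
    (∀ m : M, Term S M' mar' (n' + mar m)) → Term S M' mar' n'
  | _, _, .var x, σ, _ => σ x
  | _, _, .mvar m ts, σ, s =>
      subst (s m) (Fin.addCases (fun j => .var j) (fun j => msubstS (ts j) σ s))
  | _, _, .op o ts, σ, s =>
      .op o (fun i => msubstS (ts i) (extSub σ _) (fun m => rename (s m) (midWeak _ _ _)))

theorem extSub_var_comp {n n' p : ℕ} (ρ : Fin n → Fin n') :
    extSub (fun x => (.var (ρ x) : Term S M mar n')) p = fun x => .var (extRen ρ p x) := by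
  funext x
  cases x using Fin.addCases with
  | left j => simp [weaken, rename]
  | right j => simp

theorem msubst_eq_msubstS {n : ℕ} (t : Term S M mar n) :
    ∀ {n' : ℕ} (ρ : Fin n → Fin n') (s : ∀ m : M, Term S M' mar' (n' + mar m)),
      msubst t ρ s = msubstS t (fun x => .var (ρ x)) s := by
  induction t with
  | var x => intros; rfl
  | mvar m ts ih =>
    intro n' ρ s
    simp only [msubst, msubstS]
    congr 1
    funext x
    cases x using Fin.addCases with
    | left j => simp
    | right j => simp [ih]
  | op o ts ih =>
    intro n' ρ s
    simp only [msubst, msubstS]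
    congr 1
    funext i
    rw [ih i, extSub_var_comp]

theorem msubstS_rename {n : ℕ} (t : Term S M mar n) :
    ∀ {n' n'' : ℕ} (ρ : Fin n → Fin n') (σ : Fin n' → Term S M' mar' n'')
      (s : ∀ m : M, Term S M' mar' (n'' + mar m)),
      msubstS (rename t ρ) σ s = msubstS t (fun x => σ (ρ x)) s := by
  induction t with
  | var x => intros; rfl
  | mvar m ts ih =>
    intro n' n'' ρ σ s
    simp only [rename, msubstS]
    congr 1
    funext x
    cases x using Fin.addCases with
    | left j => simp
    | right j => simp [ih]
  | op o ts ih =>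
    intro n' n'' ρ σ s
    simp only [rename, msubstS]
    congr 1
    funext i
    rw [ih i]
    have h1 : (fun x => extSub σ _ (extRen ρ _ x)) =
        extSub (fun x => σ (ρ x)) ((S.arity o).ar i) := by
      funext x
      cases x using Fin.addCases with
      | left j => simp
      | right j => simp
    rw [h1]

theorem rename_msubstS {n : ℕ} (t : Term S M mar n) :
    ∀ {n' n'' : ℕ} (σ : Fin n → Term S M' mar' n') (s : ∀ m : M, Term S M' mar' (n' + mar m))
      (ρ : Fin n' → Fin n''),
      rename (msubstS t σ s) ρ
        = msubstS t (fun x => rename (σ x) ρ) (fun m => rename (s m) (extRen ρ (mar m))) := by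
  induction t with
  | var x => intros; rfl
  | mvar m ts ih =>
    intro n' n'' σ s ρ
    simp only [msubstS]
    rw [rename_subst, subst_rename]
    congr 1
    funext x
    cases x using Fin.addCases with
    | left j => simp [rename]
    | right j => simp [ih]
  | op o ts ih =>
    intro n' n'' σ s ρ
    simp only [rename, msubstS]
    congr 1
    funext i
    rw [ih i]
    have h1 : (fun x => rename (extSub σ _ x) (extRen ρ _)) =
        extSub (fun x => rename (σ x) ρ) ((S.arity o).ar i) := by
      funext x
      cases x using Fin.addCases with
      | left j => simp [weaken_rename]
      | right j => simp [rename]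
    have h2 : (fun m => rename (rename (s m) (midWeak n' _ (mar m))) (extRen (extRen ρ _) (mar m))) =
        fun m => rename (rename (s m) (extRen ρ (mar m))) (midWeak n'' ((S.arity o).ar i) (mar m)) := by
      funext m
      rw [rename_rename, rename_rename]
      congr 1
      funext x
      cases x using Fin.addCases with
      | left j => simp
      | right j => simp
    rw [h1, h2]

theorem subst_msubstS {n : ℕ} (t : Term S M mar n) :
    ∀ {n' n'' : ℕ} (σ : Fin n → Term S M' mar' n') (s : ∀ m : M, Term S M' mar' (n' + mar m))
      (γ : Fin n' → Term S M' mar' n''),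
      subst (msubstS t σ s) γ
        = msubstS t (fun x => subst (σ x) γ) (fun m => subst (s m) (extSub γ (mar m))) := by
  induction t with
  | var x => intros; rfl
  | mvar m ts ih =>
    intro n' n'' σ s γ
    simp only [msubstS]
    rw [subst_subst, subst_subst]
    congr 1
    funext x
    cases x using Fin.addCases with
    | left j =>
      simp only [Fin.addCases_left, extSub_castAdd, subst, weaken, subst_rename]
      simp
    | right j => simp [subst, ih]
  | op o ts ih =>
    intro n' n'' σ s γ
    simp only [subst, msubstS]
    congr 1
    funext i
    rw [ih i]
    have h1 : (fun x => subst (extSub σ _ x) (extSub γ _)) =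
        extSub (fun x => subst (σ x) γ) ((S.arity o).ar i) := by
      funext x
      cases x using Fin.addCases with
      | left j => simp only [extSub_castAdd, weaken, subst_rename, rename_subst]
      | right j => simp [subst]
    have h2 : (fun m => subst (rename (s m) (midWeak n' _ (mar m))) (extSub (extSub γ _) (mar m))) =
        fun m => rename (subst (s m) (extSub γ (mar m))) (midWeak n'' ((S.arity o).ar i) (mar m)) := by
      funext m
      rw [subst_rename, rename_subst]
      congr 1
      funext x
      cases x using Fin.addCases with
      | left j => simp [weaken, rename_rename]
      | right j => simp [rename]
    rw [h1, h2]

theorem msubstS_subst {n : ℕ} (t : Term S M mar n) :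
    ∀ {n₁ n₂ : ℕ} (θ : Fin n → Term S M mar n₁) (σ : Fin n₁ → Term S M' mar' n₂)
      (s : ∀ m : M, Term S M' mar' (n₂ + mar m)),
      msubstS (subst t θ) σ s = msubstS t (fun x => msubstS (θ x) σ s) s := by
  induction t with
  | var x => intros; rfl
  | mvar m ts ih =>
    intro n₁ n₂ θ σ s
    simp only [subst, msubstS]
    congr 1
    funext x
    cases x using Fin.addCases with
    | left j => simp
    | right j => simp [ih]
  | op o ts ih =>
    intro n₁ n₂ θ σ s
    simp only [subst, msubstS]
    congr 1
    funext i
    rw [ih i]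
    have h1 : (fun x => msubstS (extSub θ _ x) (extSub σ _)
          (fun m => rename (s m) (midWeak n₂ _ (mar m)))) =
        extSub (fun x => msubstS (θ x) σ s) ((S.arity o).ar i) := by
      funext x
      cases x using Fin.addCases with
      | left j =>
        simp only [extSub_castAdd, weaken, msubstS_rename, rename_msubstS,
          midWeak_eq_extRen]
      | right j => simp [msubstS]
    rw [h1]
theorem subst_weaken_addCases {n₂ p : ℕ} (u : Term S M mar n₂)
    (g : Fin p → Term S M mar n₂) :
    subst (weaken p u) (Fin.addCases (fun j => .var j) g) = u := by
  rw [weaken, subst_rename]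
  have : (fun x => Fin.addCases (fun j => (.var j : Term S M mar n₂)) g
      (Fin.castAdd p x)) = fun x => (.var x : Term S M mar n₂) := by
    funext x
    simp
  rw [this, subst_var]

theorem subst_midWeak_addCases {n₂ p q : ℕ} (u : Term S M mar (n₂ + q))
    (g : Fin p → Term S M mar n₂) :
    subst (rename u (midWeak n₂ p q))
      (extSub (Fin.addCases (fun j => .var j) g) q) = u := by
  rw [subst_rename]
  have : (fun x => extSub (Fin.addCases (fun j => (.var j : Term S M mar n₂)) g) q
      (midWeak n₂ p q x)) = fun x => (.var x : Term S M mar (n₂ + q)) := by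
    funext x
    cases x using Fin.addCases with
    | left j => simp [weaken, rename]
    | right j => simp
  rw [this, subst_var]

theorem msubstS_msubstS {n : ℕ} (t : Term S M mar n) :
    ∀ {n₁ n₂ : ℕ} (σ₁ : Fin n → Term S M' mar' n₁)
      (s₁ : ∀ m : M, Term S M' mar' (n₁ + mar m))
      (σ : Fin n₁ → Term S M'' mar'' n₂)
      (s : ∀ m' : M', Term S M'' mar'' (n₂ + mar' m')),
      msubstS (msubstS t σ₁ s₁) σ s
        = msubstS t (fun x => msubstS (σ₁ x) σ s)
            (fun m => msubstS (s₁ m) (extSub σ (mar m))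
              (fun m' => rename (s m') (midWeak n₂ (mar m) (mar' m')))) := by
  induction t with
  | var x => intros; rfl
  | mvar m ts ih =>
    intro n₁ n₂ σ₁ s₁ σ s
    simp only [msubstS]
    rw [msubstS_subst, subst_msubstS]
    congr 1
    · congr 1
      funext x
      cases x using Fin.addCases with
      | left j =>
        simp only [Fin.addCases_left, msubstS, extSub_castAdd, subst_weaken_addCases]
      | right j =>
        simp only [Fin.addCases_right, extSub_natAdd, subst, Fin.addCases_right, ih]
    · funext m'
      exact (subst_midWeak_addCases _ _).symm
  | op o ts ih =>
    intro n₁ n₂ σ₁ s₁ σ s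
    simp only [msubstS]
    congr 1
    funext i
    rw [ih i]
    have h1 : (fun x => msubstS (extSub σ₁ _ x) (extSub σ _)
          (fun m' => rename (s m') (midWeak n₂ _ (mar' m')))) =
        extSub (fun x => msubstS (σ₁ x) σ s) ((S.arity o).ar i) := by
      funext x
      cases x using Fin.addCases with
      | left j =>
        simp only [extSub_castAdd, weaken, msubstS_rename, rename_msubstS,
          midWeak_eq_extRen]
      | right j => simp [msubstS]
    have h2 : (fun m => msubstS (rename (s₁ m) (midWeak n₁ _ (mar m)))
          (extSub (extSub σ _) (mar m))
          (fun m' => rename (rename (s m') (midWeak n₂ _ (mar' m')))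
            (midWeak (n₂ + (S.arity o).ar i) (mar m) (mar' m')))) =
        (fun m => rename (msubstS (s₁ m) (extSub σ (mar m))
            (fun m' => rename (s m') (midWeak n₂ (mar m) (mar' m'))))
          (midWeak n₂ ((S.arity o).ar i) (mar m))) := by
      funext m
      rw [msubstS_rename, rename_msubstS]
      have h2a : (fun x => extSub (extSub σ ((S.arity o).ar i)) (mar m)
            (midWeak n₁ ((S.arity o).ar i) (mar m) x)) =
          (fun x => rename (extSub σ (mar m) x)
            (midWeak n₂ ((S.arity o).ar i) (mar m))) := by
        funext x
        cases x using Fin.addCases with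
        | left j => simp [weaken, rename_rename]
        | right j => simp [rename]
      have h2b : (fun m' => rename (rename (s m') (midWeak n₂ _ (mar' m')))
            (midWeak (n₂ + (S.arity o).ar i) (mar m) (mar' m'))) =
          (fun m' => rename (rename (s m') (midWeak n₂ (mar m) (mar' m')))
            (extRen (midWeak n₂ ((S.arity o).ar i) (mar m)) (mar' m'))) := by
        funext m'
        rw [rename_rename, rename_rename]
        congr 1
        funext x
        cases x using Fin.addCases with
        | left j => simp
        | right j => simp
      rw [h2a, h2b]
    rw [h1, h2]
end Term

open Term

variable {S S' : SOSig} (τ : Translation S S') {M : Type} {mar : M → ℕ}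

theorem Translation.ext_var {n : ℕ} (x : Fin n) :
    τ.ext (.var x : Term S M mar n) = .var x := rfl

theorem Translation.ext_rename {n : ℕ} (t : Term S M mar n) :
    ∀ {n' : ℕ} (ρ : Fin n → Fin n'), τ.ext (rename t ρ) = rename (τ.ext t) ρ := by
  induction t with
  | var x => intros; rfl
  | mvar m ts ih =>
    intro n' ρ
    simp only [rename, Translation.ext]
    congr 1
    funext j
    exact ih j ρ
  | op o ts ih =>
    intro n' ρ
    simp only [rename, Translation.ext]
    rw [msubst_eq_msubstS, msubst_eq_msubstS, rename_msubstS]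
    congr 1
    · funext x
      exact x.elim0
    · funext i
      exact ih i (extRen ρ _)

theorem Translation.ext_extSub {n n' p : ℕ} (σ : Fin n → Term S M mar n') :
    (fun x => τ.ext (extSub σ p x)) = extSub (fun y => τ.ext (σ y)) p := by
  funext x
  cases x using Fin.addCases with
  | left j => simp [weaken, Translation.ext_rename]
  | right j => simp [Translation.ext]

theorem Translation.ext_subst {n : ℕ} (t : Term S M mar n) :
    ∀ {n' : ℕ} (σ : Fin n → Term S M mar n'),
      τ.ext (subst t σ) = subst (τ.ext t) (fun x => τ.ext (σ x)) := by
  induction t with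
  | var x => intros; rfl
  | mvar m ts ih =>
    intro n' σ
    simp only [subst, Translation.ext]
    congr 1
    funext j
    exact ih j σ
  | op o ts ih =>
    intro n' σ
    simp only [subst, Translation.ext]
    rw [msubst_eq_msubstS, msubst_eq_msubstS, subst_msubstS]
    congr 1
    · funext x
      exact x.elim0
    · funext i
      rw [ih i, Translation.ext_extSub]

theorem Translation.ext_msubstS {M' : Type} {mar' : M' → ℕ} {n : ℕ} (t : Term S M mar n) :
    ∀ {n' : ℕ} (σ : Fin n → Term S M' mar' n') (s : ∀ m : M, Term S M' mar' (n' + mar m)),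
      τ.ext (msubstS t σ s)
        = msubstS (τ.ext t) (fun x => τ.ext (σ x)) (fun m => τ.ext (s m)) := by
  induction t with
  | var x => intros; rfl
  | mvar m ts ih =>
    intro n' σ s
    simp only [msubstS, Translation.ext]
    rw [Translation.ext_subst]
    congr 1
    funext x
    cases x using Fin.addCases with
    | left j => simp [Translation.ext]
    | right j => simp [ih]
  | op o ts ih =>
    intro n' σ s
    simp only [msubstS, Translation.ext]
    rw [msubst_eq_msubstS, msubst_eq_msubstS, msubstS_msubstS]
    congr 1
    · funext x
      exact x.elim0
    · funext i
      rw [ih i, Translation.ext_extSub]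
      congr 1
      funext m
      rw [Translation.ext_rename]

theorem Translation.ext_msubst {M' : Type} {mar' : M' → ℕ} {n n' : ℕ}
    (t : Term S M mar n) (ρ : Fin n → Fin n')
    (s : ∀ m : M, Term S M' mar' (n' + mar m)) :
    τ.ext (msubst t ρ s) = msubst (τ.ext t) ρ (fun m => τ.ext (s m)) := by
  rw [msubst_eq_msubstS, msubst_eq_msubstS, Translation.ext_msubstS]
  simp only [Translation.ext_var]

end SO


open SO SO.Term

/-- The extension of a syntactic translation `τ : ℰ → ℰ'` between second-order
equational presentations preserves second-order equational derivability: if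
`Θ ▹ Γ ⊢ s ≡ t` is derivable from the axioms of `ℰ` in Second-Order Equational Logic,
then `Θ ▹ Γ ⊢ τ(s) ≡ τ(t)` is derivable from the axioms of `ℰ'`. -/
theorem translation_preserves_derivability
    {P P' : SOPres} (τ : Translation P.sig P'.sig) (hτ : IsEqTranslation P P' τ)
    {k : ℕ} {mar : Fin k → ℕ} {n : ℕ} {s t : Term P.sig (Fin k) mar n}
    (h : SODeriv P.sig P.axioms k mar n s t) :
    SODeriv P'.sig P'.axioms k mar n (τ.ext s) (τ.ext t) := by
  induction h with
  | ax he => exact hτ _ he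
  | refl u => exact .refl _
  | symm _ ih => exact .symm ih
  | trans _ _ ih₁ ih₂ => exact .trans ih₁ ih₂
  | msub _ _ ih ihs =>
    simp only [Translation.ext_msubst, Translation.ext_rename]
    exact SODeriv.msub ih ihs
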